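/- arXiv:2108.06951 — 2 statements merged into one kernel-verified Lean document; each statement's English description precedes it below -/
import Mathlib

section
/- Let (ℝⁿ, g) be a rotationally symmetric metric dr² + f(r)² g_{S^{n−1}} with ε^{n−1} ≥ f^{n−1} on [0,∞) and f(r) = ε for r ≥ ε, let q be the origin and r₀ > 2ε. Set τ = π/(2r₀) and φ(x) = cos(τ d(x,q)). Then the Rayleigh quotient satisfies ∫|∇φ|² dμ / ∫φ² dμ ≤ τ² · (∫₀^{π/2} sin²s ds) / (∫_{τε}^{π/2} cos²s ds). -/
open MeasureTheory Filter Real Set Metric Topology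

/-- Abstract data of a Riemannian structure on a metric space `M`: the Riemannian
measure, the Laplace–Beltrami operator, the pointwise norm of the gradient,
the dimension, and the predicate "the Ricci curvature is nonnegative". -/
structure RiemannianSetup (M : Type*) [MetricSpace M] [MeasurableSpace M] where
  vol : Measure M
  lap : (M → ℝ) → M → ℝ
  gradNorm : (M → ℝ) → M → ℝ
  dim : ℕ
  RicciNonneg : Prop

/-- The first Dirichlet eigenvalue of a domain, defined as the infimum of the
Rayleigh quotients of nonzero test functions supported in the domain. -/
noncomputable def RiemannianSetup.lambda1 {M : Type*} [MetricSpace M] [MeasurableSpace M]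
    (G : RiemannianSetup M) (Ω : Set M) : ℝ :=
  sInf { r : ℝ | ∃ φ : M → ℝ, Continuous φ ∧ tsupport φ ⊆ Ω ∧
    0 < ∫ x, φ x ^ 2 ∂G.vol ∧
    r = (∫ x, G.gradNorm φ x ^ 2 ∂G.vol) / ∫ x, φ x ^ 2 ∂G.vol }

/-- A unit-speed geodesic ray (parametrized on `[0, ∞)`) in a metric space. -/
def IsRay {M : Type*} [MetricSpace M] (γ : ℝ → M) : Prop :=
  ∀ s t : ℝ, 0 ≤ s → 0 ≤ t → dist (γ s) (γ t) = |s - t|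

/-- `b` is the Busemann function of the ray `γ` : `b x = lim_{t→∞} (t - d(x, γ t))`. -/
def IsBusemann {M : Type*} [MetricSpace M] (γ : ℝ → M) (b : M → ℝ) : Prop :=
  ∀ x, Tendsto (fun t => t - dist x (γ t)) atTop (𝓝 (b x))

/-
On `[0, r₀]` the weight `f ^ (n - 1)` is at most `ε ^ (n - 1)`, which bounds the numerator by
`ε ^ (n - 1) ∫₀^{r₀} τ² sin² (τ r) dr`; on `[ε, r₀]` it equals `ε ^ (n - 1)`, which bounds the
denominator from below by `ε ^ (n - 1) ∫_ε^{r₀} cos² (τ r) dr`. The substitution `s = τ r` maps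
`[0, r₀]` onto `[0, π/2]`, and the common factor `ε ^ (n - 1)` cancels.
-/

lemma div_le_div_of_eq_zero_or_le {a b c d : ℝ} (hc : 0 ≤ c) (hac : a ≤ c) (hd : 0 < d)
    (hb : b = 0 ∨ d ≤ b) : a / b ≤ c / d := by
  rcases hb with hb | hdb
  · rw [hb, div_zero]
    exact div_nonneg hc hd.le
  · exact div_le_div₀ hc hac hd hdb

namespace intervalIntegral

lemma integral_mono_of_nonneg {f g : ℝ → ℝ} {a b : ℝ} (hab : a ≤ b)
    (hf : ∀ x ∈ Ioc a b, 0 ≤ f x) (hfg : ∀ x ∈ Ioc a b, f x ≤ g x)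
    (hg : IntervalIntegrable g volume a b) :
    ∫ x in a..b, f x ≤ ∫ x in a..b, g x := by
  rw [integral_of_le hab, integral_of_le hab]
  exact setIntegral_mono_of_nonneg hf hfg (hg.def' |>.mono_set <| by rw [uIoc_of_le hab])

/-- The alternative `∫ x in a..c, f x = 0` covers the junk value of a non-integrable `f`. -/
lemma integral_eq_zero_or_le_of_nonneg {f : ℝ → ℝ} {a b c : ℝ} (hab : a ≤ b) (hbc : b ≤ c)
    (hf : ∀ x ∈ Ioc a c, 0 ≤ f x) :
    ∫ x in a..c, f x = 0 ∨ ∫ x in b..c, f x ≤ ∫ x in a..c, f x := by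
  by_cases hfi : IntervalIntegrable f volume a c
  · exact Or.inr <| integral_mono_interval hab hbc le_rfl
      (ae_restrict_of_forall_mem measurableSet_Ioc hf) hfi
  · exact Or.inl <| integral_undef hfi

end intervalIntegral

lemma integral_sq_cos_pos {a : ℝ} (ha : -(π / 2) ≤ a) (h : a < π / 2) :
    0 < ∫ s in a..π / 2, cos s ^ 2 := by
  refine intervalIntegral.intervalIntegral_pos_of_pos_on
    (Continuous.intervalIntegrable (by fun_prop) _ _) (fun x hx => ?_) h
  have : 0 < cos x := cos_pos_of_mem_Ioo ⟨by linarith [hx.1], hx.2⟩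
  positivity

lemma integral_sq_mul_sin_mul_mul_const {τ : ℝ} (hτ : τ ≠ 0) (C a b : ℝ) :
    ∫ r in a..b, (τ * sin (τ * r)) ^ 2 * C = C * τ * ∫ s in τ * a..τ * b, sin s ^ 2 := by
  have hsub := intervalIntegral.integral_comp_mul_left (a := a) (b := b) (fun s => sin s ^ 2) hτ
  simp only [smul_eq_mul] at hsub
  simp only [mul_pow, mul_assoc, intervalIntegral.integral_const_mul,
    intervalIntegral.integral_mul_const, hsub]
  field_simp

lemma integral_sq_cos_mul_mul_const {τ : ℝ} (hτ : τ ≠ 0) (C a b : ℝ) :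
    ∫ r in a..b, cos (τ * r) ^ 2 * C = C * τ⁻¹ * ∫ s in τ * a..τ * b, cos s ^ 2 := by
  have hsub := intervalIntegral.integral_comp_mul_left (a := a) (b := b) (fun s => cos s ^ 2) hτ
  simp only [smul_eq_mul] at hsub
  rw [intervalIntegral.integral_mul_const, hsub]
  ring

lemma integral_sq_mul_sin_mul_mul_le {τ b C : ℝ} {w : ℝ → ℝ} (hτ : τ ≠ 0) (hb : 0 ≤ b)
    (hw : ∀ r ∈ Ioc 0 b, 0 ≤ w r ∧ w r ≤ C) :
    ∫ r in (0 : ℝ)..b, (τ * sin (τ * r)) ^ 2 * w r ≤ C * τ * ∫ s in (0 : ℝ)..τ * b, sin s ^ 2 :=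
  calc _ ≤ ∫ r in (0 : ℝ)..b, (τ * sin (τ * r)) ^ 2 * C :=
        intervalIntegral.integral_mono_of_nonneg hb
          (fun r hr => mul_nonneg (sq_nonneg _) (hw r hr).1)
          (fun r hr => mul_le_mul_of_nonneg_left (hw r hr).2 (sq_nonneg _))
          (Continuous.intervalIntegrable (by fun_prop) _ _)
    _ = _ := by rw [integral_sq_mul_sin_mul_mul_const hτ, mul_zero]

lemma integral_sq_cos_mul_mul_eq_zero_or_ge {τ a b C : ℝ} {w : ℝ → ℝ} (hτ : τ ≠ 0)
    (ha : 0 ≤ a) (hab : a ≤ b) (hw0 : ∀ r ∈ Ioc 0 b, 0 ≤ w r) (hwC : ∀ r ∈ Icc a b, w r = C) :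
    (∫ r in (0 : ℝ)..b, cos (τ * r) ^ 2 * w r) = 0 ∨
      C * τ⁻¹ * (∫ s in τ * a..τ * b, cos s ^ 2) ≤ ∫ r in (0 : ℝ)..b, cos (τ * r) ^ 2 * w r := by
  have htail : ∫ r in a..b, cos (τ * r) ^ 2 * w r = C * τ⁻¹ * ∫ s in τ * a..τ * b, cos s ^ 2 := by
    rw [← integral_sq_cos_mul_mul_const hτ]
    refine intervalIntegral.integral_congr fun r hr => ?_
    rw [uIcc_of_le hab] at hr
    simp only [hwC r hr]
  exact htail ▸ intervalIntegral.integral_eq_zero_or_le_of_nonneg ha hab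
    fun r hr => mul_nonneg (sq_nonneg _) (hw0 r hr)

theorem stmt14_general (n : ℕ) (ε : ℝ) (hε : 0 < ε)
    (f : ℝ → ℝ) (hf0 : ∀ r, 0 ≤ r → 0 ≤ f r)
    (hfε : ∀ r, 0 ≤ r → f r ^ (n - 1) ≤ ε ^ (n - 1))
    (hfc : ∀ r, ε ≤ r → f r = ε)
    (r₀ : ℝ) (hr₀ : 2 * ε < r₀) (τ : ℝ) (hτ : τ = π / (2 * r₀)) :
    (∫ r in (0 : ℝ)..r₀, (τ * sin (τ * r)) ^ 2 * f r ^ (n - 1)) /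
      (∫ r in (0 : ℝ)..r₀, cos (τ * r) ^ 2 * f r ^ (n - 1))
    ≤ τ ^ 2 * (∫ s in (0 : ℝ)..(π / 2), sin s ^ 2) /
        ∫ s in (τ * ε)..(π / 2), cos s ^ 2 := by
  have hr₀pos : 0 < r₀ := by linarith
  have hτ0 : 0 < τ := by rw [hτ]; positivity
  have hτr₀ : τ * r₀ = π / 2 := by rw [hτ]; field_simp
  have hτε : τ * ε < π / 2 := by rw [← hτr₀]; gcongr; linarith
  have hsin : 0 ≤ ∫ s in (0 : ℝ)..(π / 2), sin s ^ 2 :=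
    intervalIntegral.integral_nonneg (by positivity) fun _ _ => sq_nonneg _
  have hcos := integral_sq_cos_pos (by linarith [pi_pos, mul_pos hτ0 hε]) hτε
  have hnum := integral_sq_mul_sin_mul_mul_le (C := ε ^ (n - 1)) hτ0.ne' hr₀pos.le
    fun r hr => ⟨pow_nonneg (hf0 r hr.1.le) _, hfε r hr.1.le⟩
  have hden := integral_sq_cos_mul_mul_eq_zero_or_ge (b := r₀) (C := ε ^ (n - 1)) hτ0.ne' hε.le
    (by linarith) (fun r hr => pow_nonneg (hf0 r hr.1.le) _) fun r hr => by rw [hfc r hr.1]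
  rw [hτr₀] at hnum hden
  calc _ ≤ (ε ^ (n - 1) * τ * ∫ s in (0 : ℝ)..(π / 2), sin s ^ 2) /
        (ε ^ (n - 1) * τ⁻¹ * ∫ s in (τ * ε)..(π / 2), cos s ^ 2) :=
        div_le_div_of_eq_zero_or_le (by positivity) hnum (by positivity) hden
    _ = _ := by field_simp

/-- The Rayleigh quotient of the radial test function `φ = cos(τ d(·,q))` on the
warped product, written radially: `∫|∇φ|² dμ = ω_{n-1}∫ h'(r)² f(r)^{n-1} dr`
and `∫φ² dμ = ω_{n-1}∫ h(r)² f(r)^{n-1} dr`, is bounded by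
`τ² (∫₀^{π/2} sin²s ds)/(∫_{τε}^{π/2} cos²s ds)`. -/
theorem stmt14 (n : ℕ) (hn : 2 ≤ n) (ε : ℝ) (hε : 0 < ε)
    (f : ℝ → ℝ) (hf0 : ∀ r, 0 ≤ r → 0 ≤ f r)
    (hfε : ∀ r, 0 ≤ r → f r ^ (n - 1) ≤ ε ^ (n - 1))
    (hfc : ∀ r, ε ≤ r → f r = ε)
    (r₀ : ℝ) (hr₀ : 2 * ε < r₀) (τ : ℝ) (hτ : τ = π / (2 * r₀)) :
    (∫ r in (0 : ℝ)..r₀, (τ * sin (τ * r)) ^ 2 * f r ^ (n - 1)) /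
      (∫ r in (0 : ℝ)..r₀, cos (τ * r) ^ 2 * f r ^ (n - 1))
    ≤ τ ^ 2 * (∫ s in (0 : ℝ)..(π / 2), sin s ^ 2) /
        ∫ s in (τ * ε)..(π / 2), cos s ^ 2 :=
  stmt14_general n ε hε f hf0 hfε hfc r₀ hr₀ τ hτ
end

section
/- Let u be a nonnegative first Dirichlet eigenfunction on B₁(p) with max u = u(x₁) = 1 and eigenvalue λ₁, in a complete noncompact manifold with Ric ≥ 0, and let b be the Busemann function of a ray from p. If arcsin(u(x)) ≤ √λ₁(1 − b(x)) on B₁(p) and λ₁ = π²/16, then b(x₁) = −1, contradicting b(x₁) ≥ −d(x₁,p) > −1. Hence λ₁(B₁(p)) ≠ π²/16. -/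
open MeasureTheory Filter Real Set Metric Topology

theorem IsBusemann.neg_dist_le {M : Type*} [MetricSpace M] {γ : ℝ → M} {b : M → ℝ}
    (hγ : IsRay γ) (hb : IsBusemann γ b) (x : M) : -dist x (γ 0) ≤ b x := by
  refine ge_of_tendsto (hb x) ?_
  filter_upwards [eventually_ge_atTop 0] with t ht
  have hγt : dist (γ 0) (γ t) = t := by rw [hγ 0 t le_rfl ht, zero_sub, abs_neg, abs_of_nonneg ht]
  linarith [dist_triangle x (γ 0) (γ t)]

theorem stmt17_general {M : Type*} [MetricSpace M] [MeasurableSpace M]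
    (G : RiemannianSetup M) (p : M)
    (γ : ℝ → M) (hγ : IsRay γ) (hγ0 : γ 0 = p)
    (b : M → ℝ) (hb : IsBusemann γ b)
    (u : M → ℝ) (lam : ℝ) (hlam : lam = G.lambda1 (Metric.ball p 1))
    (x₁ : M) (hx₁ : x₁ ∈ Metric.ball p 1) (hmax : u x₁ = 1)
    (hest : ∀ x ∈ Metric.ball p 1, arcsin (u x) ≤ sqrt lam * (1 - b x)) :
    G.lambda1 (Metric.ball p 1) ≠ π ^ 2 / 16 := by
  intro h
  have hsqrt : sqrt lam = π / 4 := by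
    rw [hlam, h, show π ^ 2 / 16 = (π / 4) ^ 2 by ring, sqrt_sq (by positivity)]
  have hb₁ : b x₁ ≤ -1 := by
    have h₁ := hest x₁ hx₁
    rw [hmax, arcsin_one, hsqrt] at h₁
    nlinarith [pi_pos]
  have hb₁' : -dist x₁ p ≤ b x₁ := hγ0 ▸ hb.neg_dist_le hγ x₁
  linarith [mem_ball.mp hx₁]

/-- Ruling out equality: if the C⁰ estimate holds on `B₁(p)` and the first
eigenfunction attains its maximum `1` at `x₁ ∈ B₁(p)`, then
`λ₁(B₁(p)) ≠ π²/16`. -/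
theorem stmt17 {M : Type*} [MetricSpace M] [MeasurableSpace M] [CompleteSpace M] [NoncompactSpace M]
    (G : RiemannianSetup M) (hRic : G.RicciNonneg) (p : M)
    (γ : ℝ → M) (hγ : IsRay γ) (hγ0 : γ 0 = p)
    (b : M → ℝ) (hb : IsBusemann γ b)
    (u : M → ℝ) (lam : ℝ) (hlam : lam = G.lambda1 (Metric.ball p 1))
    (hcont : Continuous u) (hsupp : tsupport u ⊆ Metric.ball p 1)
    (hnn : ∀ x, 0 ≤ u x) (hle : ∀ x, u x ≤ 1)
    (heig : ∀ x ∈ Metric.ball p 1, G.lap u x = -lam * u x)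
    (x₁ : M) (hx₁ : x₁ ∈ Metric.ball p 1) (hmax : u x₁ = 1)
    (hest : ∀ x ∈ Metric.ball p 1, arcsin (u x) ≤ sqrt lam * (1 - b x)) :
    G.lambda1 (Metric.ball p 1) ≠ π ^ 2 / 16 :=
  stmt17_general G p γ hγ hγ0 b hb u lam hlam x₁ hx₁ hmax hest
end
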